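/- arXiv:1709.07466 — 2 statements merged into one kernel-verified Lean document; each statement's English description precedes it below -/
import Mathlib

section
/- The 6-girth-thickness of the complete graph K_{10} equals 4, i.e., θ(6, K_{10}) = 4; in particular, K_{10} is the union of 4 planar subgraphs each of girth at least 6. -/
/-- A simple graph is *planar* if it can be drawn in the Euclidean plane: vertices are
distinct points, each edge is drawn as an injective arc between the images of its
endpoints, and no interior point of an arc is the image of a vertex or lies on the arc
of a different edge. -/
def SimpleGraph.IsPlanar {V : Type*} (G : SimpleGraph V) : Prop :=
  ∃ (f : V → ℝ × ℝ) (γ : ∀ u v, G.Adj u v → _root_.Path (f u) (f v)),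
    Function.Injective f ∧
    (∀ u v (h : G.Adj u v), Function.Injective (γ u v h)) ∧
    (∀ u v (h : G.Adj u v) (t : unitInterval), t ≠ 0 → t ≠ 1 → ∀ w, γ u v h t ≠ f w) ∧
    (∀ u v (h : G.Adj u v) (u' v' : V) (h' : G.Adj u' v'), s(u, v) ≠ s(u', v') →
      ∀ (s t : unitInterval), s ≠ 0 → s ≠ 1 → t ≠ 0 → t ≠ 1 →
        γ u v h s ≠ γ u' v' h' t)

/-- The `g`-girth-thickness `θ(g, G)` of a graph `G`: the minimum number of planar
subgraphs, each of girth at least `g`, whose union is `G`. -/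
noncomputable def girthThickness {V : Type*} (g : ℕ∞) (G : SimpleGraph V) : ℕ :=
  sInf {m : ℕ | ∃ H : Fin m → SimpleGraph V,
    (∀ i, (H i).IsPlanar) ∧ (∀ i, g ≤ (H i).egirth) ∧ (⨆ i, H i) = G}

/-!
Lower bound: a graph on 10 vertices without cycles of length 3, 4 or 5 has at most 14 edges,
so four such graphs are needed to cover the 45 edges of `K₁₀`. Without 3- and 4-cycles, a walk
`p - v - q` with `p ≠ q` is determined by its ends, which are not adjacent, so sending it to
`(p, q)` and a backtracking walk `p - v - p` to the dart `(v, p)` injects the walks of length two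
into the ordered pairs of distinct vertices: `∑ deg² ≤ 10 · 9`. With `deg² ≥ 5 deg - 6` this
allows at most 15 edges, and 15 edges force every degree to be 2 or 3 and the injection to be
onto. But the ends of a path `a - u - v - c` are neither adjacent nor have a common neighbour,
as there are no 4- and 5-cycles.

Upper bound: an explicit partition of `K₁₀` into four graphs of girth at least 6, each drawn with
straight segments between integer points; two segments are certified disjoint by exact
orientation tests showing that one of them lies on one side of the line through the other.
-/

open Finset

section Separation

variable {E : Type*} [AddCommGroup E] [Module ℝ E] (f : E →ₗ[ℝ] ℝ) {A B C D x : E}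

lemma LinearMap.apply_mem_openSegment (hx : x ∈ openSegment ℝ A B) :
    f x ∈ openSegment ℝ (f A) (f B) := by
  rw [← f.coe_toAffineMap, ← image_openSegment]
  exact Set.mem_image_of_mem _ hx

lemma notMem_openSegment_of_apply_ne (hAB : f A = f B) (hx : f x ≠ f A) :
    x ∉ openSegment ℝ A B := fun hx' =>
  hx (by simpa [hAB, openSegment_same] using f.apply_mem_openSegment hx')

lemma disjoint_openSegment_of_separated {c : ℝ} (hA : f A ≤ c) (hB : f B ≤ c)
    (hC : c ≤ f C) (hD : c ≤ f D) (hlt : f A < c ∨ f B < c ∨ c < f C ∨ c < f D) :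
    Disjoint (openSegment ℝ A B) (openSegment ℝ C D) := by
  refine Set.disjoint_left.2 fun x hAB hCD => ?_
  obtain ⟨a, b, ha, hb, hab, hx⟩ := f.apply_mem_openSegment hAB
  obtain ⟨a', b', ha', hb', hab', hx'⟩ := f.apply_mem_openSegment hCD
  simp only [smul_eq_mul] at hx hx'
  have hc : a * c + b * c = c := by rw [← add_mul, hab, one_mul]
  have hc' : a' * c + b' * c = c := by rw [← add_mul, hab', one_mul]
  have := mul_le_mul_of_nonneg_left hA ha.le
  have := mul_le_mul_of_nonneg_left hB hb.le
  have := mul_le_mul_of_nonneg_left hC ha'.le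
  have := mul_le_mul_of_nonneg_left hD hb'.le
  rcases hlt with h | h | h | h
  · linarith [mul_lt_mul_of_pos_left h ha]
  · linarith [mul_lt_mul_of_pos_left h hb]
  · linarith [mul_lt_mul_of_pos_left h ha']
  · linarith [mul_lt_mul_of_pos_left h hb']

lemma Path.segment_apply_mem_openSegment [TopologicalSpace E] [ContinuousAdd E]
    [ContinuousSMul ℝ E] {t : unitInterval} (h0 : t ≠ 0) (h1 : t ≠ 1) :
    Path.segment A B t ∈ openSegment ℝ A B :=
  lineMap_mem_openSegment ℝ A B
    ⟨unitInterval.pos_iff_ne_zero.2 h0, unitInterval.lt_one_iff_ne_one.2 h1⟩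

end Separation

theorem SimpleGraph.isPlanar_of_openSegment {V : Type*} {G : SimpleGraph V} (p : V → ℝ × ℝ)
    (hp : Function.Injective p)
    (hvert : ∀ u v, G.Adj u v → ∀ w, p w ∉ openSegment ℝ (p u) (p v))
    (hedge : ∀ u v, G.Adj u v → ∀ u' v', G.Adj u' v' → s(u, v) ≠ s(u', v') →
      Disjoint (openSegment ℝ (p u) (p v)) (openSegment ℝ (p u') (p v'))) :
    G.IsPlanar := by
  refine ⟨p, fun u v _ => Path.segment (p u) (p v), hp,
    fun u v h => Path.segment_injective_of_ne (hp.ne h.ne), ?_, ?_⟩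
  · intro u v h t h0 h1 w hw
    exact hvert u v h w (hw ▸ Path.segment_apply_mem_openSegment h0 h1)
  · intro u v h u' v' h' hne s t hs0 hs1 ht0 ht1 hst
    have hs := Path.segment_apply_mem_openSegment (A := p u) (B := p v) hs0 hs1
    have ht := Path.segment_apply_mem_openSegment (A := p u') (B := p v') ht0 ht1
    exact Set.disjoint_left.1 (hedge u v h u' v' h' hne) hs (hst ▸ ht)

section IntegerDrawing

/-- Twice the signed area of the triangle `ABC`: positive iff `C` lies to the left of the
directed line `AB`. -/
def orient (A B C : ℤ × ℤ) : ℤ := (B.1 - A.1) * (C.2 - A.2) - (B.2 - A.2) * (C.1 - A.1)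

def SegmentLeftOf (A B C D : ℤ × ℤ) : Prop :=
  0 ≤ orient A B C ∧ 0 ≤ orient A B D ∧ (0 < orient A B C ∨ 0 < orient A B D)

instance (A B C D : ℤ × ℤ) : Decidable (SegmentLeftOf A B C D) :=
  inferInstanceAs (Decidable (_ ∧ _))

def SegmentsSeparated (A B C D : ℤ × ℤ) : Prop :=
  SegmentLeftOf A B C D ∨ SegmentLeftOf B A C D ∨ SegmentLeftOf C D A B ∨ SegmentLeftOf D C A B

instance (A B C D : ℤ × ℤ) : Decidable (SegmentsSeparated A B C D) :=
  inferInstanceAs (Decidable (_ ∨ _))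

def intPoint (A : ℤ × ℤ) : ℝ × ℝ := (A.1, A.2)

lemma intPoint_injective : Function.Injective intPoint := fun A B h => by
  simp only [intPoint, Prod.mk.injEq, Int.cast_inj] at h
  exact Prod.ext h.1 h.2

def orientFunctional (A B : ℤ × ℤ) : ℝ × ℝ →ₗ[ℝ] ℝ :=
  ((B.1 - A.1 : ℤ) : ℝ) • LinearMap.snd ℝ ℝ ℝ - ((B.2 - A.2 : ℤ) : ℝ) • LinearMap.fst ℝ ℝ ℝ

lemma orientFunctional_intPoint (A B C : ℤ × ℤ) :
    orientFunctional A B (intPoint C) = orientFunctional A B (intPoint A) + orient A B C := by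
  simp only [orientFunctional, intPoint, orient, LinearMap.sub_apply, LinearMap.smul_apply,
    LinearMap.snd_apply, LinearMap.fst_apply, smul_eq_mul]
  push_cast
  ring

lemma orient_self_right (A B : ℤ × ℤ) : orient A B B = 0 := by
  simp only [orient]
  ring

lemma notMem_openSegment_of_orient_ne_zero {A B W : ℤ × ℤ} (h : orient A B W ≠ 0) :
    intPoint W ∉ openSegment ℝ (intPoint A) (intPoint B) := by
  apply notMem_openSegment_of_apply_ne (orientFunctional A B)
  · simp [orientFunctional_intPoint A B B, orient_self_right]
  · simpa [orientFunctional_intPoint A B W] using h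

lemma SegmentLeftOf.disjoint_openSegment {A B C D : ℤ × ℤ} (h : SegmentLeftOf A B C D) :
    Disjoint (openSegment ℝ (intPoint A) (intPoint B))
      (openSegment ℝ (intPoint C) (intPoint D)) := by
  obtain ⟨hC, hD, hlt⟩ := h
  refine disjoint_openSegment_of_separated (orientFunctional A B) le_rfl ?_ ?_ ?_ ?_ <;>
    simp [orientFunctional_intPoint A B B, orientFunctional_intPoint A B C,
      orientFunctional_intPoint A B D, orient_self_right, hC, hD, hlt]

lemma SegmentsSeparated.disjoint_openSegment {A B C D : ℤ × ℤ} (h : SegmentsSeparated A B C D) :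
    Disjoint (openSegment ℝ (intPoint A) (intPoint B))
      (openSegment ℝ (intPoint C) (intPoint D)) := by
  rcases h with h | h | h | h
  · exact h.disjoint_openSegment
  · simpa only [openSegment_symm] using h.disjoint_openSegment
  · exact h.disjoint_openSegment.symm
  · simpa only [openSegment_symm] using h.disjoint_openSegment.symm

theorem SimpleGraph.isPlanar_of_intPoints {V : Type*} {G : SimpleGraph V} (p : V → ℤ × ℤ)
    (hp : Function.Injective p)
    (hvert : ∀ u v, G.Adj u v → ∀ w, w ≠ u → w ≠ v → orient (p u) (p v) (p w) ≠ 0)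
    (hedge : ∀ u v, G.Adj u v → ∀ u' v', G.Adj u' v' → s(u, v) ≠ s(u', v') →
      SegmentsSeparated (p u) (p v) (p u') (p v')) :
    G.IsPlanar := by
  refine isPlanar_of_openSegment (intPoint ∘ p) (intPoint_injective.comp hp) ?_
    fun u v h u' v' h' hne => (hedge u v h u' v' h' hne).disjoint_openSegment
  intro u v h w
  have huv : intPoint (p u) ≠ intPoint (p v) := (intPoint_injective.comp hp).ne h.ne
  by_cases hwu : w = u
  · simpa [hwu] using huv
  by_cases hwv : w = v
  · simpa [hwv, eq_comm] using huv
  exact notMem_openSegment_of_orient_ne_zero (hvert u v h w hwu hwv)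

end IntegerDrawing

namespace SimpleGraph

variable {V : Type*} {G : SimpleGraph V} {a b c d e : V}

lemma not_adj_of_four_le_egirth (h : 4 ≤ G.egirth) (hab : G.Adj a b) (hbc : G.Adj b c) :
    ¬G.Adj c a := by
  intro hca
  have hc : (Walk.cons hab (.cons hbc (.cons hca .nil))).IsCycle := by
    have := hab.ne; have := hbc.ne; have := hca.ne
    simp_all [Walk.cons_isCycle_iff, Walk.cons_isPath_iff, eq_comm]
  have := h.trans (egirth_le_length hc)
  norm_num at this

lemma eq_or_eq_of_five_le_egirth (h : 5 ≤ G.egirth) (hab : G.Adj a b) (hbc : G.Adj b c)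
    (hcd : G.Adj c d) (hda : G.Adj d a) : a = c ∨ b = d := by
  by_contra! hne
  have hc : (Walk.cons hab (.cons hbc (.cons hcd (.cons hda .nil)))).IsCycle := by
    have := hab.ne; have := hbc.ne; have := hcd.ne; have := hda.ne
    simp_all [Walk.cons_isCycle_iff, Walk.cons_isPath_iff, eq_comm]
  have := h.trans (egirth_le_length hc)
  norm_num at this

lemma eq_or_eq_of_six_le_egirth (h : 6 ≤ G.egirth) (hab : G.Adj a b) (hbc : G.Adj b c)
    (hcd : G.Adj c d) (hde : G.Adj d e) (hea : G.Adj e a) :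
    a = c ∨ a = d ∨ b = d ∨ b = e ∨ c = e := by
  by_contra! hne
  have hc : (Walk.cons hab (.cons hbc (.cons hcd (.cons hde (.cons hea .nil))))).IsCycle := by
    have := hab.ne; have := hbc.ne; have := hcd.ne; have := hde.ne; have := hea.ne
    simp_all [Walk.cons_isCycle_iff, Walk.cons_isPath_iff, eq_comm]
  have := h.trans (egirth_le_length hc)
  norm_num at this

lemma six_le_egirth_of
    (h3 : ∀ a b, G.Adj a b → ∀ c, G.Adj b c → ¬G.Adj c a)
    (h4 : ∀ a b, G.Adj a b → ∀ c, G.Adj b c → ∀ d, G.Adj c d → G.Adj d a → a = c ∨ b = d)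
    (h5 : ∀ a b, G.Adj a b → ∀ c, G.Adj b c → ∀ d, G.Adj c d → ∀ e, G.Adj d e → G.Adj e a →
      a = c ∨ a = d ∨ b = d ∨ b = e ∨ c = e) :
    6 ≤ G.egirth := by
  rw [le_egirth]
  intro a w hw
  have hnd := hw.support_nodup
  rcases w with _ | ⟨hab, _ | ⟨hbc, _ | ⟨hcd, _ | ⟨hde, _ | ⟨hea, _ | ⟨-, -⟩⟩⟩⟩⟩⟩
  · exact absurd rfl hw.ne_nil
  · exact absurd hab G.irrefl
  · exact absurd hw.three_le_length (by simp)
  · exact absurd hcd (h3 _ _ hab _ hbc)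
  · rcases h4 _ _ hab _ hbc _ hcd hde with rfl | rfl <;> simp at hnd
  · rcases h5 _ _ hab _ hbc _ hcd _ hde hea with rfl | rfl | rfl | rfl | rfl <;> simp at hnd
  · simp only [Walk.length_cons]
    norm_cast
    omega

section Counting

variable [Fintype V] [DecidableEq V]

def twoWalkEnds (v p q : V) : V × V := if p = q then (v, p) else (p, q)

lemma twoWalkEnds_mem_offDiag {v p q : V} (hp : G.Adj v p) :
    twoWalkEnds v p q ∈ (univ : Finset V).offDiag := by
  unfold twoWalkEnds
  split_ifs with hpq
  · simpa using hp.ne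
  · simpa using hpq

variable [DecidableRel G.Adj]

lemma sum_degree_sq_le_card (h : 5 ≤ G.egirth) {t : Finset (V × V)}
    (ht : ∀ v p q, G.Adj v p → G.Adj v q → twoWalkEnds v p q ∈ t) :
    ∑ x, G.degree x ^ 2 ≤ #t := by
  have h4 : 4 ≤ G.egirth := le_trans (by norm_num) h
  set S := univ.sigma fun v => G.neighborFinset v ×ˢ G.neighborFinset v
  have mem_S {v p q : V} :
      (⟨v, p, q⟩ : Σ _ : V, V × V) ∈ (S : Set _) ↔ G.Adj v p ∧ G.Adj v q := by
    simp [S]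
  calc ∑ x, G.degree x ^ 2 = #S := by simp [S, card_sigma, sq]
    _ ≤ #t := by
      refine card_le_card_of_injOn (fun x => twoWalkEnds x.1 x.2.1 x.2.2) ?_ ?_
      · rintro ⟨v, p, q⟩ hx
        exact ht v p q (mem_S.1 hx).1 (mem_S.1 hx).2
      · rintro ⟨v, p, q⟩ hx ⟨v', p', q'⟩ hx' hends
        obtain ⟨hp, hq⟩ := mem_S.1 hx
        obtain ⟨hp', hq'⟩ := mem_S.1 hx'
        simp only [twoWalkEnds] at hends
        split_ifs at hends with hpq hpq' hpq' <;> simp only [Prod.mk.injEq] at hends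
        · obtain ⟨rfl, rfl⟩ := hends
          subst hpq hpq'
          rfl
        · obtain ⟨rfl, rfl⟩ := hends
          exact absurd hq'.symm (not_adj_of_four_le_egirth h4 hp' hp)
        · obtain ⟨rfl, rfl⟩ := hends
          exact absurd hq.symm (not_adj_of_four_le_egirth h4 hp hp')
        · obtain ⟨rfl, rfl⟩ := hends
          obtain rfl := (eq_or_eq_of_five_le_egirth h hp.symm hq hq'.symm hp').resolve_left hpq
          rfl

lemma sum_degree_sq_le (h : 5 ≤ G.egirth) :
    ∑ x, G.degree x ^ 2 ≤ Fintype.card V * (Fintype.card V - 1) := by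
  refine (sum_degree_sq_le_card h fun v p q hp _ => twoWalkEnds_mem_offDiag hp).trans_eq ?_
  simp [offDiag_card, Nat.mul_sub_one]

lemma sum_degree_sq_lt (h : 6 ≤ G.egirth) {a u v c : V} (hau : G.Adj a u) (huv : G.Adj u v)
    (hvc : G.Adj v c) (hav : a ≠ v) (huc : u ≠ c) :
    ∑ x, G.degree x ^ 2 < Fintype.card V * (Fintype.card V - 1) := by
  have h5 : 5 ≤ G.egirth := le_trans (by norm_num) h
  have h4 : 4 ≤ G.egirth := le_trans (by norm_num) h
  have hac : a ≠ c := by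
    rintro rfl
    exact not_adj_of_four_le_egirth h4 hau huv hvc
  have hnadj : ¬G.Adj c a := fun hca =>
    (eq_or_eq_of_five_le_egirth h5 hau huv hvc hca).elim hav huc
  have hmem : (a, c) ∈ (univ : Finset V).offDiag := by simpa using hac
  calc ∑ x, G.degree x ^ 2 ≤ #((univ : Finset V).offDiag.erase (a, c)) := by
        refine sum_degree_sq_le_card h5 fun w p q hp hq =>
          mem_erase.2 ⟨?_, twoWalkEnds_mem_offDiag hp⟩
        unfold twoWalkEnds
        split_ifs with hpq
        · rintro ⟨rfl, rfl⟩
          exact hnadj hp.symm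
        · rintro ⟨rfl, rfl⟩
          rcases eq_or_eq_of_six_le_egirth h hau huv hvc hq.symm hp with h' | h' | h' | rfl | rfl
          · exact hav h'
          · exact hac h'
          · exact huc h'
          · exact not_adj_of_four_le_egirth h4 huv hvc hq.symm
          · exact not_adj_of_four_le_egirth h4 hau huv hp
    _ < #(univ : Finset V).offDiag := card_erase_lt_of_mem hmem
    _ = Fintype.card V * (Fintype.card V - 1) := by simp [offDiag_card, Nat.mul_sub_one]

end Counting

lemma card_edgeFinset_le_fourteen {G : SimpleGraph (Fin 10)} [DecidableRel G.Adj]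
    (h : 6 ≤ G.egirth) : #G.edgeFinset ≤ 14 := by
  by_contra! h15
  have hsum : ∑ v, G.degree v = 2 * #G.edgeFinset := G.sum_degrees_eq_twice_card_edges
  have hsq : ∑ v, G.degree v ^ 2 ≤ 90 := sum_degree_sq_le (le_trans (by norm_num) h)
  -- `(d - 2) * (d - 3) ≥ 0`, with equality only for `d ∈ {2, 3}`
  have hquad : ∀ d : ℕ, 5 * d ≤ d ^ 2 + 6 := fun d => by
    rcases Nat.lt_or_ge d 3 with hd | hd
    · interval_cases d <;> norm_num
    · nlinarith
  have heq : ∀ v, 5 * G.degree v = G.degree v ^ 2 + 6 := by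
    refine fun v => (sum_eq_sum_iff_of_le fun v _ => hquad (G.degree v)).1 ?_ v (mem_univ v)
    refine le_antisymm (sum_le_sum fun v _ => hquad _) ?_
    rw [sum_add_distrib, ← mul_sum, hsum]
    simp only [sum_const, card_univ, Fintype.card_fin, smul_eq_mul]
    omega
  have hdeg : ∀ v, 1 < G.degree v := fun v => by
    have := heq v
    by_contra!
    interval_cases G.degree v <;> omega
  obtain ⟨e, he⟩ : G.edgeFinset.Nonempty := card_pos.1 (by omega)
  induction e using Sym2.ind with | _ u v => ?_
  rw [mem_edgeFinset, mem_edgeSet] at he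
  obtain ⟨a, hau, hav⟩ := exists_mem_ne (hdeg u) v
  obtain ⟨c, hvc, hcu⟩ := exists_mem_ne (hdeg v) u
  rw [mem_neighborFinset] at hau hvc
  have hlt := sum_degree_sq_lt h hau.symm he hvc hav hcu.symm
  have : ∑ v, (G.degree v ^ 2 + 6) = ∑ v, 5 * G.degree v := sum_congr rfl fun v _ => (heq v).symm
  rw [sum_add_distrib, ← mul_sum, hsum] at this
  simp only [sum_const, card_univ, Fintype.card_fin, smul_eq_mul] at this hlt
  omega

lemma card_edgeFinset_le_sum_of_iSup_eq [Fintype V] [DecidableEq V] {ι : Type*} [Fintype ι]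
    {H : ι → SimpleGraph V} [∀ i, DecidableRel (H i).Adj] [DecidableRel G.Adj]
    (hH : ⨆ i, H i = G) : #G.edgeFinset ≤ ∑ i, #(H i).edgeFinset := by
  subst hH
  refine le_trans (card_le_card fun e he => ?_) card_biUnion_le
  simpa [edgeSet_iSup] using he

lemma four_le_of_iSup_eq_completeGraph {m : ℕ} {H : Fin m → SimpleGraph (Fin 10)}
    (hg : ∀ i, 6 ≤ (H i).egirth) (hH : ⨆ i, H i = completeGraph (Fin 10)) : 4 ≤ m := by
  classical
  have : 45 ≤ 14 * m := calc
    45 = #(completeGraph (Fin 10)).edgeFinset :=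
      (card_edgeFinset_top_eq_card_choose_two (V := Fin 10)).symm
    _ ≤ ∑ i, #(H i).edgeFinset := card_edgeFinset_le_sum_of_iSup_eq hH
    _ ≤ ∑ _i : Fin m, 14 := sum_le_sum fun i _ => card_edgeFinset_le_fourteen (hg i)
    _ = 14 * m := by simp [mul_comm]
  omega

end SimpleGraph

def k10PartEdges : Fin 4 → List (Fin 10 × Fin 10) :=
  ![[(0, 2), (0, 3), (0, 4), (1, 4), (1, 5), (2, 6), (3, 9), (5, 6), (5, 7), (7, 8), (8, 9)],
    [(0, 5), (0, 7), (1, 2), (1, 6), (2, 5), (2, 8), (3, 4), (3, 8), (4, 6), (4, 9), (5, 9),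
      (6, 7)],
    [(0, 9), (1, 3), (1, 7), (1, 8), (2, 4), (2, 7), (2, 9), (3, 5), (4, 5), (6, 8), (6, 9)],
    [(0, 1), (0, 6), (0, 8), (1, 9), (2, 3), (3, 6), (3, 7), (4, 7), (4, 8), (5, 8), (7, 9)]]

def k10Part (i : Fin 4) : SimpleGraph (Fin 10) :=
  SimpleGraph.fromRel fun u v => (u, v) ∈ k10PartEdges i

instance (i : Fin 4) : DecidableRel (k10Part i).Adj := fun _ _ =>
  decidable_of_iff' _ (SimpleGraph.fromRel_adj ..)

def k10PartDrawing : Fin 4 → Fin 10 → ℤ × ℤ :=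
  ![![(7, -13), (-15, 5), (16, 3), (9, -10), (-12, -20), (-17, 15), (-11, 5), (-15, 16), (19, 3),
      (12, -10)],
    ![(-16, -2), (-4, 4), (-16, 14), (14, -1), (1, -18), (-20, -20), (4, -4), (-14, -5), (12, -1),
      (-10, -16)],
    ![(13, -18), (-19, 0), (8, -3), (-3, 14), (12, 9), (-2, 13), (14, 20), (10, -8), (-7, 17),
      (20, 10)],
    ![(-18, 16), (-11, 6), (-13, 5), (-15, -9), (6, 19), (-13, 12), (-18, -16), (14, -14),
      (-5, 11), (4, -3)]]

lemma isPlanar_k10Part (i : Fin 4) : (k10Part i).IsPlanar := by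
  refine SimpleGraph.isPlanar_of_intPoints (k10PartDrawing i) ?_ ?_ ?_ <;> revert i <;> decide

lemma six_le_egirth_k10Part (i : Fin 4) : 6 ≤ (k10Part i).egirth := by
  refine SimpleGraph.six_le_egirth_of ?_ ?_ ?_ <;> revert i <;> decide

lemma iSup_k10Part : ⨆ i, k10Part i = SimpleGraph.completeGraph (Fin 10) := by
  ext u v
  simp only [SimpleGraph.iSup_adj, SimpleGraph.completeGraph_eq_top, SimpleGraph.top_adj]
  refine ⟨fun ⟨i, h⟩ => h.ne, ?_⟩
  revert u v
  decide

theorem girthThickness_six_K10 :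
    girthThickness 6 (SimpleGraph.completeGraph (Fin 10)) = 4 ∧
    ∃ H : Fin 4 → SimpleGraph (Fin 10),
      (∀ i, (H i).IsPlanar) ∧ (∀ i, 6 ≤ (H i).egirth) ∧
      (⨆ i, H i) = SimpleGraph.completeGraph (Fin 10) := by
  have hmem : 4 ∈ {m : ℕ | ∃ H : Fin m → SimpleGraph (Fin 10),
      (∀ i, (H i).IsPlanar) ∧ (∀ i, (6 : ℕ∞) ≤ (H i).egirth) ∧
      (⨆ i, H i) = SimpleGraph.completeGraph (Fin 10)} :=
    ⟨k10Part, isPlanar_k10Part, six_le_egirth_k10Part, iSup_k10Part⟩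
  refine ⟨le_antisymm (Nat.sInf_le hmem) (le_csInf ⟨4, hmem⟩ ?_), hmem⟩
  rintro m ⟨H, -, hg, hH⟩
  exact SimpleGraph.four_le_of_iSup_eq_completeGraph hg hH
end

section
/- The 6-girth-thickness of the complete graph K_7 equals 3, i.e., θ(6, K_7) = 3; in particular, K_7 is the union of 3 planar subgraphs each of girth at least 6. -/
open Function

theorem Path.segment_parabola {a b : ℝ} (hab : a ≠ b) {t : unitInterval} (ht₀ : t ≠ 0)
    (ht₁ : t ≠ 1) :
    ∃ X, 0 < (X - a) * (b - X) ∧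
      Path.segment ((a, a ^ 2) : ℝ × ℝ) (b, b ^ 2) t = (X, X ^ 2 + (X - a) * (b - X)) := by
  have ht₀' : (0 : ℝ) < t := lt_of_le_of_ne t.2.1 fun h => ht₀ (Subtype.ext h.symm)
  have ht₁' : (t : ℝ) < 1 := lt_of_le_of_ne t.2.2 fun h => ht₁ (Subtype.ext h)
  refine ⟨a + t * (b - a), ?_, ?_⟩
  · have : (a + t * (b - a) - a) * (b - (a + t * (b - a))) = t * (1 - t) * (b - a) ^ 2 := by ring
    rw [this]
    have := sub_ne_zero.mpr hab.symm
    positivity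
  · simp only [Path.segment_apply, AffineMap.lineMap_apply_module, Prod.smul_mk, Prod.mk_add_mk,
      smul_eq_mul, Prod.mk.injEq]
    constructor <;> ring

namespace SimpleGraph

variable {V W : Type*}

theorem not_cliqueFree_three_of_adj {G : SimpleGraph V} {a b c : V}
    (hab : G.Adj a b) (hac : G.Adj a c) (hbc : G.Adj b c) : ¬G.CliqueFree 3 := by
  classical
  exact (is3Clique_triple_iff.mpr ⟨hab, hac, hbc⟩).not_cliqueFree

theorem cliqueFree_three_of_three_lt_egirth {G : SimpleGraph V} (h : 3 < G.egirth) :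
    G.CliqueFree 3 := by
  by_contra hG
  have hle := ((not_cliqueFree_iff_top_isContained 3).mp hG).egirth_le
  rw [egirth_top (by simp)] at hle
  exact h.not_ge hle

theorem not_cliqueFree_three_or_compl_of_three_le_degree {G : SimpleGraph V} {v : V}
    [Fintype (G.neighborSet v)] (h : 3 ≤ G.degree v) :
    ¬G.CliqueFree 3 ∨ ¬Gᶜ.CliqueFree 3 := by
  obtain ⟨a, ha, b, hb, c, hc, hab, hac, hbc⟩ := Finset.two_lt_card.mp h
  simp only [mem_neighborFinset] at ha hb hc
  by_cases h₁ : G.Adj a b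
  · exact .inl (not_cliqueFree_three_of_adj ha hb h₁)
  by_cases h₂ : G.Adj a c
  · exact .inl (not_cliqueFree_three_of_adj ha hc h₂)
  by_cases h₃ : G.Adj b c
  · exact .inl (not_cliqueFree_three_of_adj hb hc h₃)
  exact .inr (not_cliqueFree_three_of_adj ⟨hab, h₁⟩ ⟨hac, h₂⟩ ⟨hbc, h₃⟩)

theorem not_cliqueFree_three_or_compl [Fintype V] (G : SimpleGraph V) (hV : 6 ≤ Fintype.card V) :
    ¬G.CliqueFree 3 ∨ ¬Gᶜ.CliqueFree 3 := by
  classical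
  obtain ⟨v⟩ := Fintype.card_pos_iff.mp (by omega : 0 < Fintype.card V)
  rcases le_or_gt 3 (G.degree v) with h | h
  · exact not_cliqueFree_three_or_compl_of_three_le_degree h
  · have h' : 3 ≤ Gᶜ.degree v := by rw [degree_compl]; omega
    simpa only [compl_compl, or_comm] using not_cliqueFree_three_or_compl_of_three_le_degree h'

theorem three_le_of_iSup_eq_top [Fintype V] {m : ℕ} {H : Fin m → SimpleGraph V}
    (hH : ∀ i, (H i).CliqueFree 3) (hcover : ⨆ i, H i = ⊤) (hV : 6 ≤ Fintype.card V) :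
    3 ≤ m := by
  by_contra! hm
  obtain ⟨a, b, hab⟩ := Fintype.exists_pair_of_one_lt_card (α := V) (by omega)
  have hcover' : ∀ u v, u ≠ v → ∃ i, (H i).Adj u v := fun u v huv =>
    iSup_adj.mp (hcover ▸ huv : (⨆ i, H i).Adj u v)
  have hm₀ : 0 < m := (hcover' a b hab).choose.pos
  let first : Fin m := ⟨0, hm₀⟩
  let last : Fin m := ⟨m - 1, by omega⟩
  have hcompl : (H first)ᶜ ≤ H last := by
    rintro u v ⟨huv, hfirst⟩
    obtain ⟨i, hi⟩ := hcover' u v huv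
    obtain rfl | rfl : i = first ∨ i = last := by
      rcases i with ⟨i, _⟩; simp only [first, last, Fin.mk.injEq]; omega
    exacts [absurd hi hfirst, hi]
  rcases not_cliqueFree_three_or_compl (H first) hV with h | h
  · exact h (hH first)
  · exact h ((hH last).anti hcompl)

theorem Walk.IsCycle.mem_support_of_ncard_neighborSet_le_two [Finite V] {G : SimpleGraph V}
    (hconn : G.Connected) (hdeg : ∀ v, (G.neighborSet v).ncard ≤ 2) {u : V}
    {p : G.Walk u u} (hp : p.IsCycle) (w : V) : w ∈ p.support := by
  -- A cycle uses two edges at each of its vertices, hence all edges there when the degree is `2`.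
  have hclosed : ∀ v w, v ∈ p.support → G.Adj v w → w ∈ p.support := by
    intro v w hv hvw
    have hsub : p.toSubgraph.neighborSet v ⊆ G.neighborSet v := fun _ h => h.adj_sub
    have heq := Set.eq_of_subset_of_ncard_le hsub
      ((hdeg v).trans (hp.ncard_neighborSet_toSubgraph_eq_two hv).ge)
    rw [← mem_neighborSet, ← heq] at hvw
    exact p.mem_verts_toSubgraph.mp hvw.snd_mem
  have hreach : ∀ a b (q : G.Walk a b), a ∈ p.support → b ∈ p.support := by
    intro a b q
    induction q with
    | nil => exact id
    | cons h _ ih => exact fun ha => ih (hclosed _ _ ha h)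
  exact hreach u w (hconn.preconnected u w).some p.start_mem_support

theorem card_le_egirth_of_ncard_neighborSet_le_two [Fintype V] {G : SimpleGraph V}
    (hconn : G.Connected) (hdeg : ∀ v, (G.neighborSet v).ncard ≤ 2) :
    (Fintype.card V : ℕ∞) ≤ G.egirth := by
  classical
  refine le_egirth.mpr fun u p hp => ?_
  have hmem (w : V) : w ∈ p.support.tail := by
    have hw := hp.mem_support_of_ncard_neighborSet_le_two hconn hdeg w
    rw [← p.cons_tail_support, List.mem_cons] at hw
    rcases hw with rfl | hw
    exacts [Walk.end_mem_tail_support hp.not_nil, hw]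
  calc (Fintype.card V : ℕ∞) = (Finset.univ : Finset V).card := rfl
    _ ≤ p.support.tail.toFinset.card := by gcongr; exact fun w _ => List.mem_toFinset.mpr (hmem w)
    _ ≤ p.support.tail.length := by exact_mod_cast p.support.tail.toFinset_card_le
    _ = p.length := by simp

theorem egirth_cycleGraph (n : ℕ) : (cycleGraph (n + 3)).egirth = n + 3 := by
  refine le_antisymm ?_ ?_
  · simpa [cycleGraph.length_cycle] using egirth_le_length cycleGraph.isCycle_cycle
  · have hdeg (v : Fin (n + 3)) : ((cycleGraph (n + 3)).neighborSet v).ncard ≤ 2 := by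
      rw [cycleGraph_neighborSet]
      exact (Set.ncard_insert_le _ _).trans (by simp)
    have h := card_le_egirth_of_ncard_neighborSet_le_two (cycleGraph_connected (n := n + 2)) hdeg
    rw [Fintype.card_fin] at h
    exact_mod_cast h

theorem sym2_eq_of_mul_eq_mul {G : SimpleGraph V} {x : V → ℝ} (hx : Injective x)
    (hcross : ∀ u v u' v', G.Adj u v → G.Adj u' v' → ¬(x u < x u' ∧ x u' < x v ∧ x v < x v'))
    {u v u' v' : V} (h : G.Adj u v) (h' : G.Adj u' v') {X : ℝ}
    (hpos : 0 < (X - x u) * (x v - X))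
    (heq : (X - x u) * (x v - X) = (X - x u') * (x v' - X)) : s(u, v) = s(u', v') := by
  have hsymm (a b : ℝ) : (X - b) * (a - X) = (X - a) * (b - X) := by ring
  wlog huv : x u < x v generalizing u v
  · rw [Sym2.eq_swap]
    refine this h.symm (by rwa [hsymm]) (by rwa [hsymm]) ?_
    exact (hx.ne h.ne).lt_or_gt.resolve_left huv
  wlog huv' : x u' < x v' generalizing u' v'
  · rw [Sym2.eq_swap (a := u')]
    refine this h'.symm (by rwa [hsymm (x u') (x v')]) ?_
    exact (hx.ne h'.ne).lt_or_gt.resolve_left huv'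
  wlog hle : x u ≤ x u' generalizing u v u' v'
  · exact (this h' (heq ▸ hpos) huv' h heq.symm huv (le_of_not_ge hle)).symm
  have hX : x u < X ∧ X < x v := by constructor <;> nlinarith
  have hX' : x u' < X ∧ X < x v' := by constructor <;> nlinarith
  rcases hle.lt_or_eq with hlt | heq'
  · -- The chord `u' v'` cannot cross `u v`, so it is nested in it and lies strictly below it.
    have hv : x v' ≤ x v := le_of_not_gt fun hv => hcross u v u' v' h h' ⟨hlt, by linarith, hv⟩
    nlinarith
  · rw [heq'] at heq
    have hv : x v = x v' := by linarith [mul_left_cancel₀ (by linarith) heq]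
    rw [hx heq', hx hv]

theorem isPlanar_of_forall_not_cross {G : SimpleGraph V} {x : V → ℝ} (hx : Injective x)
    (hcross : ∀ u v u' v', G.Adj u v → G.Adj u' v' → ¬(x u < x u' ∧ x u' < x v ∧ x v < x v')) :
    G.IsPlanar := by
  have hf : Injective fun v => (x v, x v ^ 2) := fun u v h => hx (congrArg Prod.fst h)
  refine ⟨fun v => (x v, x v ^ 2), fun u v _ => Path.segment _ _, hf,
    fun u v h => Path.segment_injective_of_ne (hf.ne h.ne), ?_, ?_⟩
  · intro u v h t ht₀ ht₁ w hw
    obtain ⟨X, hpos, hP⟩ := Path.segment_parabola (hx.ne h.ne) ht₀ ht₁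
    rw [hP, Prod.mk.injEq] at hw
    obtain ⟨rfl, hw⟩ := hw
    linarith
  · intro u v h u' v' h' hne s t hs₀ hs₁ ht₀ ht₁ hst
    obtain ⟨X, hpos, hP⟩ := Path.segment_parabola (hx.ne h.ne) hs₀ hs₁
    obtain ⟨X', -, hP'⟩ := Path.segment_parabola (hx.ne h'.ne) ht₀ ht₁
    rw [hP, hP', Prod.mk.injEq] at hst
    obtain ⟨rfl, hheight⟩ := hst
    exact hne (sym2_eq_of_mul_eq_mul hx hcross h h' hpos (by linarith))

theorem IsContained.isPlanar {G : SimpleGraph V} {G' : SimpleGraph W} (h : G ⊑ G')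
    (hG' : G'.IsPlanar) : G.IsPlanar := by
  obtain ⟨φ⟩ := h
  obtain ⟨f, γ, hf, hγ, hvert, hedge⟩ := hG'
  refine ⟨f ∘ φ, fun u v h => γ (φ u) (φ v) (φ.toHom.map_adj h), hf.comp φ.injective,
    fun u v h => hγ _ _ _, fun u v h t ht₀ ht₁ w => hvert _ _ _ t ht₀ ht₁ (φ w), ?_⟩
  intro u v h u' v' h' hne
  exact hedge _ _ _ _ _ _ fun heq => hne (Sym2.map.injective φ.injective heq)

theorem cycleGraph_adj_val {n : ℕ} {u v : Fin n} (h : (cycleGraph n).Adj u v) :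
    u.val + 1 = v.val ∨ v.val + 1 = u.val ∨ (u.val = 0 ∧ v.val + 1 = n) ∨
      (v.val = 0 ∧ u.val + 1 = n) := by
  have hu := u.isLt
  have hv := v.isLt
  have hsub (a b : Fin n) : (a - b).val = a.val - b.val ∨ (a - b).val = n + a.val - b.val := by
    rcases le_or_gt b a with hle | hlt
    exacts [.inl (Fin.coe_sub_iff_le.mpr hle), .inr (Fin.coe_sub_iff_lt.mpr hlt)]
  rcases cycleGraph_adj'.mp h with h | h
  · rcases hsub u v with h' | h' <;> omega
  · rcases hsub v u with h' | h' <;> omega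

theorem isPlanar_cycleGraph (n : ℕ) : (cycleGraph n).IsPlanar := by
  refine isPlanar_of_forall_not_cross (x := fun v => (v.val : ℝ))
    (Nat.cast_injective.comp Fin.val_injective) ?_
  intro u v u' v' h h'
  simp only [Nat.cast_lt]
  have := cycleGraph_adj_val h
  have := cycleGraph_adj_val h'
  have := v'.isLt
  omega

end SimpleGraph

open SimpleGraph

/-- `sevenCycle i` joins `v` to `v ± (i + 1)`, since `1, 4, 5` are the inverses of `1, 2, 3`
modulo `7`. -/
def sevenCycle (i : Fin 3) : SimpleGraph (Fin 7) :=
  (cycleGraph 7).comap (![1, 4, 5] i * ·)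

theorem sevenCycle_isContained (i : Fin 3) : sevenCycle i ⊑ cycleGraph 7 :=
  (Embedding.comap ⟨_, by fin_cases i <;> decide⟩ _).isContained

theorem iSup_sevenCycle : ⨆ i, sevenCycle i = ⊤ := by
  ext u v
  simp only [iSup_adj, sevenCycle, comap_adj, top_adj]
  revert u v
  decide

theorem girthThickness_six_K7 :
    girthThickness 6 (SimpleGraph.completeGraph (Fin 7)) = 3 ∧
    ∃ H : Fin 3 → SimpleGraph (Fin 7),
      (∀ i, (H i).IsPlanar) ∧ (∀ i, 6 ≤ (H i).egirth) ∧
      (⨆ i, H i) = SimpleGraph.completeGraph (Fin 7) := by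
  have hcover : ∃ H : Fin 3 → SimpleGraph (Fin 7),
      (∀ i, (H i).IsPlanar) ∧ (∀ i, 6 ≤ (H i).egirth) ∧ (⨆ i, H i) = completeGraph (Fin 7) := by
    refine ⟨sevenCycle, fun i => (sevenCycle_isContained i).isPlanar (isPlanar_cycleGraph 7),
      fun i => ?_, iSup_sevenCycle⟩
    calc (6 : ℕ∞) ≤ (cycleGraph 7).egirth := by rw [egirth_cycleGraph 4]; norm_num
      _ ≤ (sevenCycle i).egirth := (sevenCycle_isContained i).egirth_le
  refine ⟨le_antisymm (Nat.sInf_le hcover) (le_csInf ⟨3, hcover⟩ ?_), hcover⟩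
  rintro m ⟨H, -, hgirth, hH⟩
  have h36 : (3 : ℕ∞) < 6 := by norm_num
  exact three_le_of_iSup_eq_top
    (fun i => cliqueFree_three_of_three_lt_egirth (h36.trans_le (hgirth i))) hH (by simp)
end
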